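/- arXiv:2409.10664 — 2 statements merged into one kernel-verified Lean document; each statement's English description precedes it below -/
import Mathlib

section
/- Let f : ℝⁿ → ℝ be differentiable, g : ℝⁿ → ℝ convex, α > 0, μ > 0. Suppose F = f + g has global minimum value F*, and for all x: (1/2)‖x - prox_{αg}(x - α∇f(x))‖₂² ≥ μα²(F(x) - F*). Then any differentiable solution x(·) of ẋ = -x + prox_{αg}(x - α∇f(x)) satisfies F(x(t)) - F* ≤ e^{-2μαt}(F(x(0)) - F*) for all t ≥ 0. -/
/-!
Write `p = prox(x)`. Along the flow, the upper right Dini derivative of `F(x(t))` is at most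
`⟪∇f(x), p - x⟫ + g(p) - g(x)`: the smooth part by the chain rule, the convex part because a
locally Lipschitz `g` only sees the tangent line of the curve, along which convexity bounds the
difference quotients by the chord slope on `[x, p]`. The variational inequality characterising
the prox bounds this by `-‖p - x‖² / α`, the PL-type condition turns it into `-2μα (F(x) - F*)`,
and Grönwall's inequality for right Dini derivatives gives the exponential decay.
-/

open Set Filter Asymptotics
open scoped Topology InnerProductSpace

lemma ConvexOn.apply_add_smul_sub_le {E : Type*} [AddCommGroup E] [Module ℝ E] {g : E → ℝ}
    (hg : ConvexOn ℝ univ g) (x y : E) {t : ℝ}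
    (ht₀ : 0 ≤ t) (ht₁ : t ≤ 1) : g (x + t • (y - x)) ≤ g x + t * (g y - g x) := by
  have h := hg.2 (mem_univ x) (mem_univ y) (sub_nonneg.2 ht₁) ht₀ (sub_add_cancel 1 t)
  rw [show (1 - t) • x + t • y = x + t • (y - x) by module, smul_eq_mul, smul_eq_mul] at h
  linarith

section Normed

variable {E : Type*} [NormedAddCommGroup E] [NormedSpace ℝ E] {g : E → ℝ}

lemma LocallyLipschitz.isLittleO_comp_sub_comp_tangent (hg : LocallyLipschitz g) {γ : ℝ → E}
    {v : E} {s : ℝ} (hγ : HasDerivAt γ v s) :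
    (fun t => g (γ t) - g (γ s + (t - s) • v)) =o[𝓝 s] fun t => t - s := by
  obtain ⟨K, U, hU, hK⟩ := hg (γ s)
  have hline : Tendsto (fun t => γ s + (t - s) • v) (𝓝 s) (𝓝 (γ s)) := by
    have : Continuous fun t : ℝ => γ s + (t - s) • v := by fun_prop
    simpa using this.tendsto s
  have hbig : (fun t => g (γ t) - g (γ s + (t - s) • v)) =O[𝓝 s]
      fun t => γ t - γ s - (t - s) • v := by
    refine IsBigO.of_bound K ?_
    filter_upwards [hγ.continuousAt hU, hline hU] with t ht hlt
    rw [← dist_eq_norm, sub_sub, ← dist_eq_norm]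
    exact hK.dist_le_mul _ ht _ hlt
  exact hbig.trans_isLittleO hγ.isLittleO

end Normed

section InnerProduct

variable {E : Type*} [NormedAddCommGroup E] [InnerProductSpace ℝ E]

lemma ConvexOn.inner_sub_le_mul_sub_of_prox {g : E → ℝ} (hg : ConvexOn ℝ univ g) {α : ℝ}
    (hα : 0 ≤ α) {w p : E} (hp : ∀ u, α * g p + ‖p - w‖ ^ 2 / 2 ≤ α * g u + ‖u - w‖ ^ 2 / 2)
    (u : E) : ⟪w - p, u - p⟫_ℝ ≤ α * (g u - g p) := by
  have hslack : ∀ t ∈ Ioc (0 : ℝ) 1,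
      0 ≤ α * (g u - g p) - ⟪w - p, u - p⟫_ℝ + t / 2 * ‖u - p‖ ^ 2 := by
    rintro t ⟨ht₀, ht₁⟩
    have hmin := hp (p + t • (u - p))
    have hcvx := hg.apply_add_smul_sub_le p u ht₀.le ht₁
    have hsq : ‖p + t • (u - p) - w‖ ^ 2
        = ‖p - w‖ ^ 2 - 2 * t * ⟪w - p, u - p⟫_ℝ + t ^ 2 * ‖u - p‖ ^ 2 := by
      rw [show p + t • (u - p) - w = (p - w) + t • (u - p) by abel, norm_add_sq_real,
        inner_smul_right, norm_smul, Real.norm_of_nonneg ht₀.le, ← neg_sub w p, inner_neg_left,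
        norm_neg]
      ring
    rw [hsq] at hmin
    refine (mul_nonneg_iff_of_pos_left ht₀).1 ?_
    nlinarith [mul_le_mul_of_nonneg_left hcvx hα]
  have hlim : Tendsto (fun t : ℝ => α * (g u - g p) - ⟪w - p, u - p⟫_ℝ + t / 2 * ‖u - p‖ ^ 2)
      (𝓝[>] 0) (𝓝 (α * (g u - g p) - ⟪w - p, u - p⟫_ℝ)) := by
    have : Continuous fun t : ℝ => α * (g u - g p) - ⟪w - p, u - p⟫_ℝ + t / 2 * ‖u - p‖ ^ 2 := by
      fun_prop
    simpa using this.continuousWithinAt (s := Ioi 0) (x := 0) |>.tendsto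
  have := ge_of_tendsto hlim (eventually_of_mem (Ioc_mem_nhdsGT zero_lt_one) hslack)
  linarith

lemma ConvexOn.inner_add_sub_le_of_prox {g : E → ℝ} (hg : ConvexOn ℝ univ g) {α : ℝ}
    (hα : 0 < α) {d y p : E}
    (hp : ∀ u, α * g p + ‖p - (y - α • d)‖ ^ 2 / 2 ≤ α * g u + ‖u - (y - α • d)‖ ^ 2 / 2) :
    ⟪d, p - y⟫_ℝ + (g p - g y) ≤ -(‖p - y‖ ^ 2 / α) := by
  have h := hg.inner_sub_le_mul_sub_of_prox hα.le hp y
  rw [show y - α • d - p = -((p - y) + α • d) by abel, ← neg_sub p y, inner_neg_neg,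
    inner_add_left, real_inner_self_eq_norm_sq, real_inner_smul_left] at h
  have : ‖p - y‖ ^ 2 / α ≤ -(⟪d, p - y⟫_ℝ + (g p - g y)) :=
    (div_le_iff₀ hα).2 (by linarith)
  linarith

variable [CompleteSpace E]

lemma eventually_slope_add_comp_lt {f g : E → ℝ} {f' u : E} {γ : ℝ → E} {s r : ℝ}
    (hf : HasGradientAt f f' (γ s)) (hg : ConvexOn ℝ univ g) (hgl : LocallyLipschitz g)
    (hγ : HasDerivAt γ (u - γ s) s) (hr : ⟪f', u - γ s⟫_ℝ + (g u - g (γ s)) < r) :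
    ∀ᶠ t in 𝓝[>] s, slope (fun t => f (γ t) + g (γ t)) s t < r := by
  set ρ := fun t => g (γ t) - g (γ s + (t - s) • (u - γ s))
  have hfγ : Tendsto (slope (f ∘ γ) s) (𝓝[>] s) (𝓝 ⟪f', u - γ s⟫_ℝ) :=
    (hasDerivAt_iff_tendsto_slope.1 (hf.hasFDerivAt.comp_hasDerivAt s hγ)).mono_left
      (nhdsGT_le_nhdsNE s)
  have hρ : Tendsto (fun t => ρ t / (t - s)) (𝓝[>] s) (𝓝 0) :=
    (hgl.isLittleO_comp_sub_comp_tangent hγ).tendsto_div_nhds_zero.mono_left nhdsWithin_le_nhds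
  have hbound : ∀ᶠ t in 𝓝[>] s, slope (fun t => f (γ t) + g (γ t)) s t ≤
      slope (f ∘ γ) s t + (g u - g (γ s)) + ρ t / (t - s) := by
    filter_upwards [Ioc_mem_nhdsGT (lt_add_one s)] with t ⟨hst, hts⟩
    have hcvx := hg.apply_add_smul_sub_le (γ s) u (sub_nonneg.2 hst.le) (by linarith)
    have hsplit : slope (fun t => f (γ t) + g (γ t)) s t = slope (f ∘ γ) s t + ρ t / (t - s) +
        (g (γ s + (t - s) • (u - γ s)) - g (γ s)) / (t - s) := by
      simp only [slope_def_field, Function.comp_apply, ρ]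
      ring
    have hchord : (g (γ s + (t - s) • (u - γ s)) - g (γ s)) / (t - s) ≤ g u - g (γ s) :=
      (div_le_iff₀ (sub_pos.2 hst)).2 (by linarith)
    linarith
  filter_upwards [hbound, ((hfγ.add_const _).add hρ).eventually (gt_mem_nhds (by simpa using hr))]
    with t h₁ h₂
  linarith

end InnerProduct

theorem cost_exp_convergence_flow_condition_general {n : ℕ}
    (f g : EuclideanSpace ℝ (Fin n) → ℝ)
    (f' prox : EuclideanSpace ℝ (Fin n) → EuclideanSpace ℝ (Fin n))
    (hf : ∀ y, HasGradientAt f (f' y) y)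
    (hg : ConvexOn ℝ Set.univ g) (α μ : ℝ) (hα : 0 < α)
    (Fstar : ℝ)
    (hprox : ∀ y u, α * g (prox y) + ‖prox y - (y - α • f' y)‖ ^ 2 / 2 ≤
                    α * g u + ‖u - (y - α • f' y)‖ ^ 2 / 2)
    (hcond : ∀ y, (1 / 2) * ‖y - prox y‖ ^ 2 ≥ μ * α ^ 2 * (f y + g y - Fstar))
    (x : ℝ → EuclideanSpace ℝ (Fin n))
    (hx : ∀ t, 0 ≤ t → HasDerivAt x (-x t + prox (x t)) t) :
    ∀ t, 0 ≤ t →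
      f (x t) + g (x t) - Fstar ≤
        Real.exp (-(2 * μ * α) * t) * (f (x 0) + g (x 0) - Fstar) := by
  intro T hT
  set φ : ℝ → ℝ := fun t => f (x t) + g (x t) - Fstar
  have hφc : ContinuousOn φ (Icc 0 T) := by
    have hxc : ContinuousOn x (Icc 0 T) := fun t ht => (hx t ht.1).continuousAt.continuousWithinAt
    have hfc : Continuous f := continuous_iff_continuousAt.2 fun y => (hf y).continuousAt
    exact ((hfc.comp_continuousOn hxc).add
      (hg.locallyLipschitz.continuous.comp_continuousOn hxc)).sub continuousOn_const
  have hslope : ∀ s ∈ Ico 0 T, ∀ r, -(2 * μ * α) * φ s < r →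
      ∃ᶠ t in 𝓝[>] s, (t - s)⁻¹ * (φ t - φ s) < r := by
    intro s hs r hr
    have hdescent := hg.inner_add_sub_le_of_prox hα (hprox (x s))
    have hPL : 2 * μ * α * φ s ≤ ‖prox (x s) - x s‖ ^ 2 / α := by
      rw [le_div_iff₀ hα, norm_sub_rev]
      linarith [hcond (x s)]
    have hγ : HasDerivAt x (prox (x s) - x s) s := by
      simpa only [neg_add_eq_sub] using hx s hs.1
    refine (eventually_slope_add_comp_lt (r := r) (hf (x s)) hg hg.locallyLipschitz hγ
      (by linarith)).frequently.mono fun t ht => ?_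
    convert ht using 1
    simp only [slope_def_field, φ]
    ring
  have hgronwall := le_gronwallBound_of_liminf_deriv_right_le hφc hslope le_rfl
    (fun s _ => (add_zero _).ge) T ⟨hT, le_rfl⟩
  rwa [gronwallBound_ε0, sub_zero, mul_comm] at hgronwall

/-- Theorem 3(iii): under the flow-based PL-type condition, the cost converges
exponentially with rate `2μα` along the proximal gradient dynamics. -/
theorem cost_exp_convergence_flow_condition {n : ℕ}
    (f g : EuclideanSpace ℝ (Fin n) → ℝ)
    (f' prox : EuclideanSpace ℝ (Fin n) → EuclideanSpace ℝ (Fin n))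
    (hf : ∀ y, HasGradientAt f (f' y) y)
    (hg : ConvexOn ℝ Set.univ g) (α μ : ℝ) (hα : 0 < α) (hμ : 0 < μ)
    (Fstar : ℝ)
    (hmin : ∀ y, Fstar ≤ f y + g y)
    (hattained : ∃ xstar, f xstar + g xstar = Fstar)
    (hprox : ∀ y u, α * g (prox y) + ‖prox y - (y - α • f' y)‖ ^ 2 / 2 ≤
                    α * g u + ‖u - (y - α • f' y)‖ ^ 2 / 2)
    (hcond : ∀ y, (1 / 2) * ‖y - prox y‖ ^ 2 ≥ μ * α ^ 2 * (f y + g y - Fstar))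
    (x : ℝ → EuclideanSpace ℝ (Fin n))
    (hx : ∀ t, 0 ≤ t → HasDerivAt x (-x t + prox (x t)) t) :
    ∀ t, 0 ≤ t →
      f (x t) + g (x t) - Fstar ≤
        Real.exp (-(2 * μ * α) * t) * (f (x 0) + g (x 0) - Fstar) :=
  cost_exp_convergence_flow_condition_general f g f' prox hf hg α μ hα Fstar hprox hcond x hx
end

section
/- Let f : ℝⁿ → ℝ be differentiable, g : ℝⁿ → ℝ convex, α > 0, μ > 0, and suppose F = f + g attains global minimum F* and satisfies the proximal PL condition (1/2)D_g(x, α) ≥ μ(F(x) - F*) for all x. Then any differentiable solution x(·) of ẋ = -x + prox_{αg}(x - α∇f(x)) satisfies F(x(t)) - F* ≤ e^{-μαt}(F(x(0)) - F*). -/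
/-!
Along the flow the velocity is `v = prox (x t) - x t`, and `prox` maximizes the expression whose
supremum defines `D_g`, so `⟪∇f, v⟫ + g (x t + v) - g (x t) ≤ -(α / 2) D_g(x t, α)`. This quantity
bounds the upper right Dini derivative of `F ∘ x`: by convexity, `g` on the tangent segment
`x t + h v` lies below the chord towards `x t + v`, and the curve leaves that segment only by
`o(h)`, which the local Lipschitz continuity of the convex `g` absorbs. The proximal PL
inequality turns this into `D⁺(F ∘ x - F*) ≤ -μα (F ∘ x - F*)`, and Gronwall's comparison lemma
for Dini derivatives gives the exponential bound.
-/

open scoped RealInnerProductSpace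
open Set Filter Topology Asymptotics

/-- `D_g(x, α)` from the proximal PL condition of Karimi–Nutini–Schmidt. -/
noncomputable def Dg {n : ℕ} (f g : EuclideanSpace ℝ (Fin n) → ℝ)
    (f' : EuclideanSpace ℝ (Fin n) → EuclideanSpace ℝ (Fin n))
    (x : EuclideanSpace ℝ (Fin n)) (β : ℝ) : ℝ :=
  (2 / β) * sSup {r : ℝ | ∃ y,
    r = ⟪f' x, x - y⟫ - ‖x - y‖ ^ 2 / (2 * β) + g x - g y}

section Dini

def UpperRightDiniLE (φ : ℝ → ℝ) (t c : ℝ) : Prop :=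
  ∀ r, c < r → ∀ᶠ z in 𝓝[>] t, slope φ t z < r

variable {φ ψ : ℝ → ℝ} {t a b : ℝ}

theorem HasDerivAt.upperRightDiniLE (h : HasDerivAt φ a t) : UpperRightDiniLE φ t a :=
  fun _ hr => ((hasDerivAt_iff_tendsto_slope.mp h).mono_left
    (nhdsWithin_mono t fun _ hz => ne_of_gt hz)).eventually (gt_mem_nhds hr)

theorem UpperRightDiniLE.mono (h : UpperRightDiniLE φ t a) (hab : a ≤ b) :
    UpperRightDiniLE φ t b :=
  fun r hr => h r (hab.trans_lt hr)

theorem UpperRightDiniLE.add (hφ : UpperRightDiniLE φ t a) (hψ : UpperRightDiniLE ψ t b) :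
    UpperRightDiniLE (φ + ψ) t (a + b) := by
  intro r hr
  filter_upwards [hφ (a + (r - a - b) / 2) (by linarith),
    hψ (b + (r - a - b) / 2) (by linarith)] with z hφz hψz
  have : slope (φ + ψ) t z = slope φ t z + slope ψ t z := by
    simp only [slope_def_field, Pi.add_apply]; ring
  linarith

theorem UpperRightDiniLE.sub_const (h : UpperRightDiniLE φ t a) (C : ℝ) :
    UpperRightDiniLE (fun s => φ s - C) t a := by
  have : slope (fun s => φ s - C) t = slope φ t := by
    ext z; simp only [slope_def_field, sub_sub_sub_cancel_right]
  simpa only [UpperRightDiniLE, this] using h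

theorem le_exp_mul_of_upperRightDiniLE {k : ℝ} (hab : a ≤ b) (hφ : ContinuousOn φ (Icc a b))
    (hD : ∀ t ∈ Ico a b, UpperRightDiniLE φ t (k * φ t)) :
    φ b ≤ Real.exp (k * (b - a)) * φ a := by
  have := le_gronwallBound_of_liminf_deriv_right_le (f' := fun t => k * φ t) (K := k) (ε := 0) hφ
    (fun t ht r hr => (hD t ht r hr).frequently) le_rfl (fun _ _ => by simp) b ⟨hab, le_rfl⟩
  rwa [gronwallBound_ε0, mul_comm] at this

end Dini

section Convex

variable {E : Type*} [NormedAddCommGroup E] [NormedSpace ℝ E] {g : E → ℝ} {x : ℝ → E} {v : E}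
  {t : ℝ}

theorem LocallyLipschitz.isLittleO_comp_sub_tangent (hg : LocallyLipschitz g)
    (hx : HasDerivAt x v t) :
    (fun z => g (x z) - g (x t + (z - t) • v)) =o[𝓝 t] fun z => z - t := by
  obtain ⟨K, U, hU, hK⟩ := hg (x t)
  refine IsBigO.trans_isLittleO (IsBigO.of_bound K ?_) (hasDerivAt_iff_isLittleO.mp hx)
  have hxU : ∀ᶠ z in 𝓝 t, x z ∈ U := hx.continuousAt.eventually_mem hU
  have htanU : ∀ᶠ z in 𝓝 t, x t + (z - t) • v ∈ U :=
    (show ContinuousAt (fun z : ℝ => x t + (z - t) • v) t by fun_prop).eventually_mem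
      (by simpa using hU)
  filter_upwards [hxU, htanU] with z hz htz
  rw [Real.norm_eq_abs, ← Real.dist_eq, show x z - x t - (z - t) • v
    = x z - (x t + (z - t) • v) by abel, ← dist_eq_norm]
  exact hK.dist_le_mul _ hz _ htz

theorem ConvexOn.map_add_smul_sub_le (hg : ConvexOn ℝ univ g) (y : E) {h : ℝ} (h₀ : 0 ≤ h)
    (h₁ : h ≤ 1) : g (y + h • v) - g y ≤ h * (g (y + v) - g y) := by
  have := hg.2 (mem_univ y) (mem_univ (y + v)) (sub_nonneg.mpr h₁) h₀ (sub_add_cancel 1 h)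
  rw [show (1 - h) • y + h • (y + v) = y + h • v by module, smul_eq_mul, smul_eq_mul] at this
  linarith

theorem ConvexOn.upperRightDiniLE_comp [FiniteDimensional ℝ E] (hg : ConvexOn ℝ univ g)
    (hx : HasDerivAt x v t) : UpperRightDiniLE (g ∘ x) t (g (x t + v) - g (x t)) := by
  intro r hr
  have hε : 0 < (r - (g (x t + v) - g (x t))) / 2 := by linarith
  have hnear : ∀ᶠ z in 𝓝 t, z - t ≤ 1 :=
    (eventually_le_nhds (lt_add_one t)).mono fun _ hz => by linarith
  filter_upwards [(hg.locallyLipschitz.isLittleO_comp_sub_tangent hx).def hε |>.filter_mono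
    nhdsWithin_le_nhds, hnear.filter_mono nhdsWithin_le_nhds, self_mem_nhdsWithin]
    with z hlip hz1 (hz : t < z)
  have hpos : 0 < z - t := sub_pos.mpr hz
  have hconv := hg.map_add_smul_sub_le (v := v) (x t) hpos.le hz1
  rw [Real.norm_eq_abs, Real.norm_eq_abs, abs_of_pos hpos] at hlip
  rw [slope_def_field, div_lt_iff₀ hpos, Function.comp_apply, Function.comp_apply]
  nlinarith [le_abs_self (g (x z) - g (x t + (z - t) • v))]

end Convex

section Prox

variable {E : Type*} [NormedAddCommGroup E] [InnerProductSpace ℝ E] {g : E → ℝ} {d y p : E}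
  {α : ℝ}

theorem isMaxOn_of_isMinOn_prox (hα : 0 < α)
    (hp : IsMinOn (fun u => α * g u + ‖u - (y - α • d)‖ ^ 2 / 2) univ p) :
    IsMaxOn (fun u => ⟪d, y - u⟫ - ‖y - u‖ ^ 2 / (2 * α) + g y - g u) univ p := by
  have hscale : ∀ u, α * (⟪d, y - u⟫ - ‖y - u‖ ^ 2 / (2 * α) + g y - g u)
      = α * g y + ‖α • d‖ ^ 2 / 2 - (α * g u + ‖u - (y - α • d)‖ ^ 2 / 2) := by
    intro u
    rw [show u - (y - α • d) = α • d - (y - u) by abel, norm_sub_sq_real (α • d),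
      real_inner_smul_left]
    field_simp
    ring
  intro u _
  have := isMinOn_univ_iff.mp hp u
  exact le_of_mul_le_mul_left (by rw [hscale, hscale]; linarith) hα

end Prox

theorem inner_sub_add_sub_le_Dg {n : ℕ} (f g : EuclideanSpace ℝ (Fin n) → ℝ)
    (f' : EuclideanSpace ℝ (Fin n) → EuclideanSpace ℝ (Fin n)) {y p : EuclideanSpace ℝ (Fin n)}
    {α : ℝ} (hα : 0 < α)
    (hp : IsMinOn (fun u => α * g u + ‖u - (y - α • f' y)‖ ^ 2 / 2) univ p) :
    ⟪f' y, p - y⟫ + g p - g y ≤ -(α / 2) * Dg f g f' y α := by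
  have hsup : sSup {r : ℝ | ∃ u, r = ⟪f' y, y - u⟫ - ‖y - u‖ ^ 2 / (2 * α) + g y - g u}
      ≤ ⟪f' y, y - p⟫ - ‖y - p‖ ^ 2 / (2 * α) + g y - g p :=
    csSup_le ⟨_, y, rfl⟩ fun _ ⟨u, hu⟩ => hu ▸ isMaxOn_of_isMinOn_prox hα hp (mem_univ u)
  have hinner : ⟪f' y, y - p⟫ = -⟪f' y, p - y⟫ := by rw [← inner_neg_right, neg_sub]
  have hDg : -(α / 2) * Dg f g f' y α
      = -sSup {r : ℝ | ∃ u, r = ⟪f' y, y - u⟫ - ‖y - u‖ ^ 2 / (2 * α) + g y - g u} := by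
    rw [Dg]; field_simp
  rw [hDg]
  have : 0 ≤ ‖y - p‖ ^ 2 / (2 * α) := by positivity
  linarith

theorem cost_exp_convergence_prox_PL_general {n : ℕ}
    (f g : EuclideanSpace ℝ (Fin n) → ℝ)
    (f' prox : EuclideanSpace ℝ (Fin n) → EuclideanSpace ℝ (Fin n))
    (hf : ∀ y, HasGradientAt f (f' y) y)
    (hg : ConvexOn ℝ Set.univ g) (α μ : ℝ) (hα : 0 < α)
    (Fstar : ℝ)
    (hPL : ∀ y, (1 / 2) * Dg f g f' y α ≥ μ * (f y + g y - Fstar))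
    (hprox : ∀ y u, α * g (prox y) + ‖prox y - (y - α • f' y)‖ ^ 2 / 2 ≤
                    α * g u + ‖u - (y - α • f' y)‖ ^ 2 / 2)
    (x : ℝ → EuclideanSpace ℝ (Fin n))
    (hx : ∀ t, 0 ≤ t → HasDerivAt x (-x t + prox (x t)) t) :
    ∀ t, 0 ≤ t →
      f (x t) + g (x t) - Fstar ≤
        Real.exp (-(μ * α) * t) * (f (x 0) + g (x 0) - Fstar) := by
  have hdescent : ∀ y, ⟪f' y, prox y - y⟫ + g (prox y) - g y
      ≤ -(μ * α) * (f y + g y - Fstar) := fun y => by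
    have := inner_sub_add_sub_le_Dg f g f' hα (isMinOn_univ_iff.mpr (hprox y))
    have := mul_le_mul_of_nonneg_left (hPL y) hα.le
    linarith
  have hdini : ∀ t, 0 ≤ t → UpperRightDiniLE (fun s => f (x s) + g (x s) - Fstar) t
      (-(μ * α) * (f (x t) + g (x t) - Fstar)) := fun t ht => by
    have hfx : HasDerivAt (f ∘ x) ⟪f' (x t), prox (x t) - x t⟫ t := by
      simpa [neg_add_eq_sub] using (hf (x t)).hasFDerivAt.comp_hasDerivAt t (hx t ht)
    have hgx := hg.upperRightDiniLE_comp (hx t ht)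
    rw [add_neg_cancel_left] at hgx
    exact ((hfx.upperRightDiniLE.add hgx).sub_const Fstar).mono (by linarith [hdescent (x t)])
  intro T hT
  have hcont : ContinuousOn (fun s => f (x s) + g (x s) - Fstar) (Icc 0 T) := fun s hs =>
    ((((hf _).differentiableAt.continuousAt.comp (hx s hs.1).continuousAt).add
      (hg.locallyLipschitz.continuous.continuousAt.comp (hx s hs.1).continuousAt)).sub
        continuousAt_const).continuousWithinAt
  simpa only [sub_zero] using
    le_exp_mul_of_upperRightDiniLE hT hcont fun t ht => hdini t ht.1

/-- Theorem 8: the proximal PL condition implies global exponential convergence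
of the cost with rate `μα` along the proximal gradient dynamics. -/
theorem cost_exp_convergence_prox_PL {n : ℕ}
    (f g : EuclideanSpace ℝ (Fin n) → ℝ)
    (f' prox : EuclideanSpace ℝ (Fin n) → EuclideanSpace ℝ (Fin n))
    (hf : ∀ y, HasGradientAt f (f' y) y)
    (hg : ConvexOn ℝ Set.univ g) (α μ : ℝ) (hα : 0 < α) (hμ : 0 < μ)
    (Fstar : ℝ)
    (hmin : ∀ y, Fstar ≤ f y + g y)
    (hattained : ∃ xstar, f xstar + g xstar = Fstar)
    (hPL : ∀ y, (1 / 2) * Dg f g f' y α ≥ μ * (f y + g y - Fstar))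
    (hprox : ∀ y u, α * g (prox y) + ‖prox y - (y - α • f' y)‖ ^ 2 / 2 ≤
                    α * g u + ‖u - (y - α • f' y)‖ ^ 2 / 2)
    (x : ℝ → EuclideanSpace ℝ (Fin n))
    (hx : ∀ t, 0 ≤ t → HasDerivAt x (-x t + prox (x t)) t) :
    ∀ t, 0 ≤ t →
      f (x t) + g (x t) - Fstar ≤
        Real.exp (-(μ * α) * t) * (f (x 0) + g (x 0) - Fstar) :=
  cost_exp_convergence_prox_PL_general f g f' prox hf hg α μ hα Fstar hPL hprox x hx
end
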